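/- arXiv:2104.07009 — 9 statements merged into one kernel-verified Lean document; each statement's English description precedes it below -/
import Mathlib

section
/- For σ ≥ 2 and f ∈ [-1/2, 1/2], r_σ(f) ≤ (1 - e^{-1})^{3⌊σ²⌋} ≤ exp(-σ²), where r_σ(f) = ∑_{j∈ℤ} (-1)^j exp(-(j²+2fj)/(2σ²)). -/
open Real

noncomputable def pw (σ x : ℝ) : ℝ :=
  ∑' j : ℕ, (-1 : ℝ) ^ j * Real.exp (-(((j : ℝ) + 1) ^ 2 + 2 * x * ((j : ℝ) + 1)) / (2 * σ ^ 2))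

noncomputable def rw' (σ f : ℝ) : ℝ :=
  ∑' j : ℤ, (-1 : ℝ) ^ j * Real.exp (-(((j : ℝ) ^ 2 + 2 * f * (j : ℝ)) / (2 * σ ^ 2)))

/-!
Poisson summation (Jacobi's theta transformation) turns `r_σ(f)` into `√(2πσ²)` times a theta
series over the shifted lattice `ℤ + 1/2`, whose terms have modulus
`exp (f² / (2σ²) - 2π²σ² (n + 1/2)²)`. Since `(n + 1/2)² ≥ 1/4`, this gives
`|r_σ(f)| = O(σ² exp (-π²σ²/2))`, far below `exp (-3σ²/2) ≤ (1 - e⁻¹) ^ (3⌊σ²⌋)`.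
The comparison `(1 - e⁻¹) ^ (3n) ≤ exp (-(n + 1))` for `n ≥ 3` is numerical.
-/

-- `F_int 0 a t` is Mathlib's `∑' n : ℤ, exp (-π (n + a)² t)`, for `a` read in `ℝ / ℤ`.
open HurwitzKernelBounds

lemma F_int_zero_le {a : ℝ} (ha : a ∈ Set.Icc 0 1) {t : ℝ} (ht : 0 < t) :
    F_int 0 a t ≤ (rexp (-π * a ^ 2 * t) + rexp (-π * (1 - a) ^ 2 * t)) / (1 - rexp (-π * t)) := by
  rw [F_int_eq_of_mem_Icc 0 ha ht, add_div]
  exact add_le_add ((le_norm_self _).trans (F_nat_zero_le ha.1 ht))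
    ((le_norm_self _).trans (F_nat_zero_le (sub_nonneg.2 ha.2) ht))

lemma F_int_zero_nonneg {a : ℝ} (ha : a ∈ Set.Icc 0 1) {t : ℝ} (ht : 0 < t) : 0 ≤ F_int 0 a t := by
  rw [F_int_eq_of_mem_Icc 0 ha ht]
  exact add_nonneg (tsum_nonneg fun n => by unfold f_nat; positivity)
    (tsum_nonneg fun n => by unfold f_nat; positivity)

lemma F_int_zero_half_le {t : ℝ} (ht : 1 ≤ t) : F_int 0 (1 / 2 : ℝ) t ≤ 4 * rexp (-(π * t / 4)) := by
  have hgap : 1 / 2 ≤ 1 - rexp (-π * t) := by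
    have : rexp (-π * t) ≤ rexp (-1) := exp_le_exp.2 (by nlinarith [pi_gt_three])
    linarith [exp_neg_one_lt_half]
  have hquarter : rexp (-π * (1 / 2) ^ 2 * t) = rexp (-(π * t / 4)) := by ring_nf
  refine (F_int_zero_le (by norm_num) (by positivity)).trans ?_
  rw [div_le_iff₀ (by linarith), sub_self_div_two, hquarter]
  nlinarith [exp_pos (-(π * t / 4))]

open Complex in
lemma abs_tsum_alternating_gaussian_le {t : ℝ} (ht : 0 < t) (x : ℝ) :
    |∑' n : ℤ, (-1 : ℝ) ^ n * rexp (-(((n : ℝ) ^ 2 + 2 * x * n) / t))| ≤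
      √(π * t) * rexp (x ^ 2 / t) * F_int 0 (1 / 2 : ℝ) (π * t) := by
  have hπt : 0 < π * t := by positivity
  set a : ℂ := (((π * t)⁻¹ : ℝ) : ℂ)
  -- the imaginary part `-1/2` of `b` produces the sign `(-1) ^ n = exp (-π i n)` and shifts
  -- the dual lattice to `ℤ + 1/2`
  set b : ℂ := ((-(x / (π * t)) : ℝ) : ℂ) - I / 2
  have ha : 0 < a.re := by simp only [a, ofReal_re]; positivity
  have hterm (n : ℤ) : cexp (-π * a * n ^ 2 + 2 * π * b * n) =
      ((-1 : ℝ) ^ n * rexp (-(((n : ℝ) ^ 2 + 2 * x * n) / t)) : ℝ) := by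
    have : -π * a * n ^ 2 + 2 * π * b * n =
        ((-(((n : ℝ) ^ 2 + 2 * x * n) / t) : ℝ) : ℂ) + n * (-(π * I)) := by
      simp only [a, b]; push_cast; field_simp; ring
    rw [this, Complex.exp_add, Complex.exp_int_mul, exp_neg_pi_mul_I, ← ofReal_exp]
    push_cast; ring
  have hdual (n : ℤ) : ‖cexp (-π / a * (n + I * b) ^ 2)‖ =
      rexp (x ^ 2 / t) * f_int 0 (1 / 2) (π * t) n := by
    have hπa : -(π : ℂ) / a = ((-(π * (π * t))) : ℝ) := by
      simp only [a, ofReal_inv, div_inv_eq_mul]; push_cast; ring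
    rw [Complex.norm_exp, f_int, pow_zero, one_mul, ← Real.exp_add, hπa]
    congr 1
    simp only [b, pow_two, div_ofNat_re, div_ofNat_im, add_re, add_im, mul_re, mul_im, sub_re,
      sub_im, I_re, I_im, ofReal_re, ofReal_im, intCast_re, intCast_im]
    field_simp
    ring
  have hsum : Summable fun n : ℤ => ‖cexp (-π / a * (n + I * b) ^ 2)‖ := by
    simp_rw [hdual]; exact (summable_f_int 0 _ hπt).mul_left _
  have hnorm : ‖1 / a ^ (1 / 2 : ℂ)‖ = √(π * t) := by
    rw [norm_div, norm_one, norm_cpow_eq_rpow_re_of_pos (inv_pos.2 hπt), Real.inv_rpow hπt.le,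
      one_div, inv_inv, Real.sqrt_eq_rpow]
    norm_num
  calc |∑' n : ℤ, (-1 : ℝ) ^ n * rexp (-(((n : ℝ) ^ 2 + 2 * x * n) / t))|
      = ‖∑' n : ℤ, cexp (-π * a * n ^ 2 + 2 * π * b * n)‖ := by
        simp_rw [hterm, ← ofReal_tsum, norm_real, Real.norm_eq_abs]
    _ = √(π * t) * ‖∑' n : ℤ, cexp (-π / a * (n + I * b) ^ 2)‖ := by
        rw [tsum_exp_neg_quadratic ha, norm_mul, hnorm]
    _ ≤ √(π * t) * ∑' n : ℤ, rexp (x ^ 2 / t) * f_int 0 (1 / 2) (π * t) n := by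
        gcongr
        exact (norm_tsum_le_tsum_norm hsum).trans_eq (tsum_congr hdual)
    _ = √(π * t) * rexp (x ^ 2 / t) * F_int 0 (1 / 2 : ℝ) (π * t) := by
        rw [tsum_mul_left, F_int, Function.Periodic.lift_coe, mul_assoc]

lemma abs_rw'_le_exp {σ f : ℝ} (hσ : 2 ≤ σ) (hf : |f| ≤ 1 / 2) :
    |rw' σ f| ≤ rexp (-(3 / 2) * σ ^ 2) := by
  have hσ2 : 4 ≤ σ ^ 2 := by nlinarith
  have hπ2 : 9 ≤ π ^ 2 := by nlinarith [pi_gt_three]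
  have hsqrt : √(π * (2 * σ ^ 2)) ≤ 3 * σ ^ 2 := by
    rw [Real.sqrt_le_left (by positivity)]
    nlinarith [pi_lt_four]
  have hshift : rexp (f ^ 2 / (2 * σ ^ 2)) ≤ 3 := by
    have : f ^ 2 / (2 * σ ^ 2) ≤ 1 := by
      rw [div_le_one (by positivity)]
      nlinarith [sq_abs f, abs_nonneg f]
    exact (exp_le_exp.2 this).trans exp_one_lt_three.le
  have hdual : F_int 0 (1 / 2 : ℝ) (π * (2 * σ ^ 2)) ≤ 4 * rexp (-(9 / 2) * σ ^ 2) :=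
    (F_int_zero_half_le (by nlinarith [pi_gt_three])).trans
      (by gcongr; nlinarith)
  have hpoly : 36 * σ ^ 2 ≤ rexp (3 * σ ^ 2) := by
    have := pow_div_factorial_le_exp (x := 3 * σ ^ 2) (by positivity) 4
    norm_num [Nat.factorial] at this
    nlinarith [mul_le_mul hσ2 hσ2 (by norm_num) (by positivity)]
  calc |rw' σ f|
      ≤ √(π * (2 * σ ^ 2)) * rexp (f ^ 2 / (2 * σ ^ 2)) * F_int 0 (1 / 2 : ℝ) (π * (2 * σ ^ 2)) :=
        abs_tsum_alternating_gaussian_le (by positivity) f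
    _ ≤ 3 * σ ^ 2 * 3 * (4 * rexp (-(9 / 2) * σ ^ 2)) := by
        gcongr
        exact F_int_zero_nonneg (by norm_num) (by positivity)
    _ = 36 * σ ^ 2 * rexp (-(9 / 2) * σ ^ 2) := by ring
    _ ≤ rexp (3 * σ ^ 2) * rexp (-(9 / 2) * σ ^ 2) := by gcongr
    _ = rexp (-(3 / 2) * σ ^ 2) := by rw [← exp_add]; ring_nf

lemma exp_neg_half_le_one_sub_exp_neg_one : rexp (-(1 / 2)) ≤ 1 - rexp (-1) := by
  have hsq : rexp (-(1 / 2)) ^ 2 = rexp (-1) := by rw [← exp_nat_mul]; norm_num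
  nlinarith [exp_pos (-(1 / 2)), exp_neg_one_lt_d9]

lemma one_sub_exp_neg_one_pow_le {n : ℕ} (hn : 3 ≤ n) :
    (1 - rexp (-1)) ^ (3 * n) ≤ rexp (-(n + 1)) := by
  set E := rexp (-1)
  have hlo := exp_neg_one_gt_d9
  have hhi := exp_neg_one_lt_d9
  have hcube : (1 - E) ^ 3 ≤ 7 / 10 * E := by
    nlinarith [mul_nonneg (sub_nonneg.2 hlo.le) (sq_nonneg (E - 1)),
      mul_nonneg (sub_nonneg.2 hlo.le) (sub_nonneg.2 hhi.le)]
  have hseven : (7 / 10 : ℝ) ^ n ≤ E :=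
    (pow_le_pow_of_le_one (by norm_num) (by norm_num) hn).trans (by norm_num; linarith)
  calc (1 - E) ^ (3 * n) = ((1 - E) ^ 3) ^ n := pow_mul _ _ _
    _ ≤ (7 / 10 * E) ^ n := pow_le_pow_left₀ (pow_nonneg (by linarith) 3) hcube n
    _ = (7 / 10) ^ n * E ^ n := mul_pow _ _ _
    _ ≤ E * E ^ n := by gcongr
    _ = rexp (-(n + 1)) := by rw [← pow_succ', ← exp_nat_mul]; push_cast; ring_nf

theorem stmt5 (σ f : ℝ) (hσ : 2 ≤ σ) (hf : f ∈ Set.Icc (-(1:ℝ)/2) (1/2)) :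
    rw' σ f ≤ (1 - Real.exp (-1)) ^ (3 * ⌊σ ^ 2⌋₊) ∧
    (1 - Real.exp (-1)) ^ (3 * ⌊σ ^ 2⌋₊) ≤ Real.exp (-σ ^ 2) := by
  set n := ⌊σ ^ 2⌋₊
  have hσ2 : (4 : ℝ) ≤ σ ^ 2 := by nlinarith
  have hn_le : (n : ℝ) ≤ σ ^ 2 := Nat.floor_le (by positivity)
  have hlt_n : σ ^ 2 < n + 1 := Nat.lt_floor_add_one _
  have hn : 3 ≤ n := Nat.le_floor (by norm_num; linarith)
  constructor
  · calc rw' σ f ≤ |rw' σ f| := le_abs_self _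
      _ ≤ rexp (-(3 / 2) * σ ^ 2) := abs_rw'_le_exp hσ (abs_le.2 ⟨by linarith [hf.1], hf.2⟩)
      _ ≤ rexp (-(1 / 2)) ^ (3 * n) := by
          rw [← exp_nat_mul, exp_le_exp]; push_cast; nlinarith
      _ ≤ (1 - rexp (-1)) ^ (3 * n) := by
          gcongr; exact exp_neg_half_le_one_sub_exp_neg_one
  · calc (1 - rexp (-1)) ^ (3 * n) ≤ rexp (-(n + 1)) := one_sub_exp_neg_one_pow_le hn
      _ ≤ rexp (-σ ^ 2) := exp_le_exp.2 (by linarith)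
end

section
/- For all σ > 0 and x ∈ ℝ, p_σ(x-1)·exp(-(x-1)²/(2σ²)) + (1 - p_σ(x+1))·exp(-(x+1)²/(2σ²)) = exp(-x²/(2σ²)), where p_σ(y) = ∑_{j≥1} (-1)^{j-1} exp(-(j²+2yj)/(2σ²)). -/
open Real

/-!
Writing `G y = exp (-y² / (2σ²))` and `A y = ∑_{n ≥ 0} (-1)ⁿ G (y + n)`, completing the square gives
`p_σ(y) G y = A (y + 1)`, and peeling off the first term gives `A y = G y - A (y + 1)`.
Applying this recursion at `x` and `x + 1` turns the left-hand side into
`(G x - G (x + 1) + A (x + 2)) + G (x + 1) - A (x + 2) = G x`.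
-/

noncomputable def altGaussSum (σ y : ℝ) : ℝ :=
  ∑' n : ℕ, (-1 : ℝ) ^ n * exp (-(y + n) ^ 2 / (2 * σ ^ 2))

lemma pw_mul_exp (σ y : ℝ) :
    pw σ y * exp (-y ^ 2 / (2 * σ ^ 2)) = altGaussSum σ (y + 1) := by
  rw [pw, altGaussSum, ← tsum_mul_right]
  congr 1 with n
  rw [mul_assoc, ← exp_add, ← add_div]
  congr 3
  ring

lemma summable_exp_neg_sq_shift_div {σ : ℝ} (hσ : σ ≠ 0) (y : ℝ) :
    Summable fun n : ℕ => exp (-(y + n) ^ 2 / (2 * σ ^ 2)) := by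
  have hc : 0 < 2 * σ ^ 2 := by positivity
  have hgeom : Summable fun n : ℕ => exp (n * (-1 / (2 * σ ^ 2))) :=
    summable_exp_nat_mul_iff.mpr (div_neg_of_neg_of_pos (by norm_num) hc)
  refine (hgeom.mul_left (exp ((1 / 4 - y) / (2 * σ ^ 2)))).of_nonneg_of_le
    (fun _ => (exp_pos _).le) fun n => ?_
  rw [← exp_add, exp_le_exp]
  have hsq : -(y + n) ^ 2 ≤ 1 / 4 - y - n := by nlinarith [sq_nonneg (y + n - 1 / 2)]
  calc -(y + n) ^ 2 / (2 * σ ^ 2) ≤ (1 / 4 - y - n) / (2 * σ ^ 2) :=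
        div_le_div_of_nonneg_right hsq hc.le
    _ = _ := by ring

lemma altGaussSum_eq_sub {σ : ℝ} (hσ : σ ≠ 0) (y : ℝ) :
    altGaussSum σ y = exp (-y ^ 2 / (2 * σ ^ 2)) - altGaussSum σ (y + 1) := by
  have hsum : Summable fun n : ℕ => (-1 : ℝ) ^ n * exp (-(y + n) ^ 2 / (2 * σ ^ 2)) :=
    (summable_exp_neg_sq_shift_div hσ y).of_norm_bounded fun n => by simp
  rw [altGaussSum, hsum.tsum_eq_zero_add, altGaussSum, sub_eq_add_neg, ← tsum_neg]
  congr 1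
  · simp
  · congr 1 with n
    push_cast
    ring_nf

theorem stmt7 (σ x : ℝ) (hσ : 0 < σ) :
    pw σ (x - 1) * Real.exp (-(x - 1) ^ 2 / (2 * σ ^ 2)) +
      (1 - pw σ (x + 1)) * Real.exp (-(x + 1) ^ 2 / (2 * σ ^ 2)) =
      Real.exp (-x ^ 2 / (2 * σ ^ 2)) := by
  rw [sub_mul, one_mul, pw_mul_exp, pw_mul_exp, sub_add_cancel,
    altGaussSum_eq_sub hσ.ne' x, altGaussSum_eq_sub hσ.ne' (x + 1)]
  ring
end

section
/- Fix σ > 0 and f ∈ [-1/2, 1/2]. The Markov kernel on f + ℤ defined as follows preserves the discrete Gaussian measure with mass at n+f proportional to exp(-(n+f)²/(2σ²)): for n ≥ 1, state n+f moves to n+1+f with probability p_σ(n+f) and to n-1+f otherwise; state -n+f moves to -n-1+f with probability p_σ(n-f) and to -n+1+f otherwise; and state f moves to 1+f with probability p_σ(f), to -1+f with probability p_σ(-f), and stays at f with probability r_σ(f) = 1 - p_σ(f) - p_σ(-f). -/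
/-!
With `g(x) = exp (-x² / (2σ²))`, multiplying the series of `p_σ(x)` by `g(x)` turns it into the
alternating tail `∑_{j ≥ 1} (-1)^{j-1} g(x + j)`, and peeling off the first term of a tail gives
`g(x) p_σ(x) = g(x + 1) (1 - p_σ(x + 1))`. This is detailed balance of the kernel across every edge
`{n, n + 1}` (on the negative half-line after `x ↦ -x`, `g` being even). Splitting the two-sided
series of `r_σ(f)` into the tails at `f` and `-f` gives `r_σ(f) = 1 - p_σ(f) - p_σ(-f)`, so the rows
of the kernel sum to one, and a reversible stochastic kernel preserves its weights.
-/

open Real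

/-- Transition kernel of the `0, ±1` walk on `f + ℤ` (states indexed by `ℤ`). -/
noncomputable def jacobiKernel (σ f : ℝ) (n m : ℤ) : ℝ :=
  if 1 ≤ n then
    (if m = n + 1 then pw σ ((n : ℝ) + f)
     else if m = n - 1 then 1 - pw σ ((n : ℝ) + f) else 0)
  else if n ≤ -1 then
    (if m = n - 1 then pw σ (-(n : ℝ) - f)
     else if m = n + 1 then 1 - pw σ (-(n : ℝ) - f) else 0)
  else
    (if m = 1 then pw σ f
     else if m = -1 then pw σ (-f)
     else if m = 0 then rw' σ f else 0)

noncomputable def gaussWeight (σ x : ℝ) : ℝ := exp (-x ^ 2 / (2 * σ ^ 2))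

lemma gaussWeight_pos (σ x : ℝ) : 0 < gaussWeight σ x := exp_pos _

lemma gaussWeight_neg (σ x : ℝ) : gaussWeight σ (-x) = gaussWeight σ x := by
  rw [gaussWeight, gaussWeight, neg_sq]

lemma gaussWeight_mul_exp (σ x y : ℝ) :
    gaussWeight σ x * exp (-(y ^ 2 + 2 * x * y) / (2 * σ ^ 2)) = gaussWeight σ (x + y) := by
  rw [gaussWeight, gaussWeight, ← exp_add]
  ring_nf

lemma summable_gaussWeight_int_add {σ : ℝ} (hσ : σ ≠ 0) (x : ℝ) :
    Summable fun n : ℤ => gaussWeight σ (n + x) := by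
  have ht : 0 < 1 / (2 * π * σ ^ 2) := by positivity
  refine (HurwitzKernelBounds.summable_f_int 0 x ht).congr fun n => ?_
  rw [HurwitzKernelBounds.f_int, pow_zero, one_mul, gaussWeight]
  field_simp

lemma summable_neg_one_pow_mul_gaussWeight_nat_add {σ : ℝ} (hσ : σ ≠ 0) (x : ℝ) :
    Summable fun n : ℕ => (-1 : ℝ) ^ n * gaussWeight σ (n + x) := by
  refine .of_norm_bounded
    (summable_int_iff_summable_nat_and_neg.mp (summable_gaussWeight_int_add hσ x)).1 fun n => ?_
  simp [abs_of_pos (gaussWeight_pos σ _)]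

lemma gaussWeight_mul_pw (σ x : ℝ) :
    gaussWeight σ x * pw σ x = ∑' j : ℕ, (-1 : ℝ) ^ j * gaussWeight σ (j + (x + 1)) := by
  rw [pw, ← tsum_mul_left]
  refine tsum_congr fun j => ?_
  rw [mul_left_comm, gaussWeight_mul_exp]
  ring_nf

lemma gaussWeight_mul_pw_eq_mul_one_sub_pw_add_one {σ : ℝ} (hσ : σ ≠ 0) (x : ℝ) :
    gaussWeight σ x * pw σ x = gaussWeight σ (x + 1) * (1 - pw σ (x + 1)) := by
  rw [mul_one_sub, gaussWeight_mul_pw, gaussWeight_mul_pw,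
    (summable_neg_one_pow_mul_gaussWeight_nat_add hσ (x + 1)).tsum_eq_zero_add]
  simp only [pow_succ, Nat.cast_add, Nat.cast_one, mul_neg_one, neg_mul, tsum_neg]
  ring_nf

lemma gaussWeight_mul_rw' (σ f : ℝ) :
    gaussWeight σ f * rw' σ f = ∑' j : ℤ, (-1 : ℝ) ^ j * gaussWeight σ (j + f) := by
  rw [rw', ← tsum_mul_left]
  refine tsum_congr fun j => ?_
  rw [mul_left_comm, ← neg_div, gaussWeight_mul_exp, add_comm]

lemma rw'_eq_one_sub_pw_sub_pw {σ : ℝ} (hσ : σ ≠ 0) (f : ℝ) :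
    rw' σ f = 1 - pw σ f - pw σ (-f) := by
  have hnat (n : ℕ) : (-1 : ℝ) ^ (n : ℤ) * gaussWeight σ ((n : ℤ) + f) =
      (-1) ^ n * gaussWeight σ (n + f) := by
    simp
  have hneg (n : ℕ) : (-1 : ℝ) ^ (-((n : ℤ) + 1)) * gaussWeight σ ((-((n : ℤ) + 1) : ℤ) + f) =
      -((-1) ^ n * gaussWeight σ (n + (-f + 1))) := by
    rw [zpow_neg, zpow_add_one₀ (by norm_num), zpow_natCast, mul_neg_one, inv_neg, ← inv_pow,
      inv_neg_one, ← gaussWeight_neg]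
    push_cast
    ring_nf
  have hsum_nat := summable_neg_one_pow_mul_gaussWeight_nat_add hσ f
  have hsum_neg := (summable_neg_one_pow_mul_gaussWeight_nat_add hσ (-f + 1)).neg
  have htail : ∑' n : ℕ, (-1 : ℝ) ^ (n + 1) * gaussWeight σ ((n + 1 : ℕ) + f) =
      -(gaussWeight σ f * pw σ f) := by
    rw [gaussWeight_mul_pw, ← tsum_neg]
    refine tsum_congr fun n => ?_
    push_cast
    ring_nf
  have hneg_tail : ∑' n : ℕ, (-1 : ℝ) ^ n * gaussWeight σ (n + (-f + 1)) =
      gaussWeight σ f * pw σ (-f) := by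
    rw [← gaussWeight_neg σ f, gaussWeight_mul_pw]
  apply mul_left_cancel₀ (gaussWeight_pos σ f).ne'
  rw [gaussWeight_mul_rw', tsum_of_nat_of_neg_add_one (hsum_nat.congr fun n => (hnat n).symm)
    (hsum_neg.congr fun n => (hneg n).symm), funext hnat, funext hneg, hsum_nat.tsum_eq_zero_add,
    htail, tsum_neg, hneg_tail]
  simp only [pow_zero, Nat.cast_zero, zero_add, one_mul]
  ring

section JacobiKernel

variable {σ f : ℝ}

lemma jacobiKernel_eq_zero {n m : ℤ} (h : m ∉ ({n - 1, n, n + 1} : Finset ℤ)) :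
    jacobiKernel σ f n m = 0 := by
  simp only [Finset.mem_insert, Finset.mem_singleton, not_or] at h
  unfold jacobiKernel
  split_ifs <;> first | rfl | omega

lemma tsum_jacobiKernel (hσ : σ ≠ 0) (n : ℤ) : ∑' m, jacobiKernel σ f n m = 1 := by
  rw [tsum_eq_sum fun m hm => jacobiKernel_eq_zero hm,
    Finset.sum_insert (by simp only [Finset.mem_insert, Finset.mem_singleton]; omega),
    Finset.sum_pair (by omega)]
  unfold jacobiKernel
  split_ifs <;> first | omega | (rw [rw'_eq_one_sub_pw_sub_pw hσ]; ring) | ring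

lemma jacobiKernel_self_add_one_of_nonneg {n : ℤ} (hn : 0 ≤ n) :
    jacobiKernel σ f n (n + 1) = pw σ (n + f) := by
  rcases hn.eq_or_lt with rfl | hn
  · simp [jacobiKernel]
  · rw [jacobiKernel, if_pos (by omega), if_pos rfl]

lemma jacobiKernel_add_one_self_of_nonneg {n : ℤ} (hn : 0 ≤ n) :
    jacobiKernel σ f (n + 1) n = 1 - pw σ (n + 1 + f) := by
  rw [jacobiKernel, if_pos (by omega), if_neg (by omega), if_pos (by ring)]
  push_cast
  rfl

lemma jacobiKernel_self_add_one_of_neg {n : ℤ} (hn : n < 0) :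
    jacobiKernel σ f n (n + 1) = 1 - pw σ (-n - f) := by
  unfold jacobiKernel
  split_ifs <;> first | omega | rfl

lemma jacobiKernel_add_one_self_of_neg {n : ℤ} (hn : n < 0) :
    jacobiKernel σ f (n + 1) n = pw σ (-n - 1 - f) := by
  rcases (Int.add_one_le_iff.mpr hn).eq_or_lt with h | h
  · obtain rfl : n = -1 := by omega
    simp [jacobiKernel]
  · unfold jacobiKernel
    split_ifs <;> first | omega | (push_cast; ring_nf)

lemma gaussWeight_mul_jacobiKernel_add_one (hσ : σ ≠ 0) (n : ℤ) :
    gaussWeight σ (n + f) * jacobiKernel σ f n (n + 1) =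
      gaussWeight σ ((n + 1 : ℤ) + f) * jacobiKernel σ f (n + 1) n := by
  rcases le_or_gt 0 n with hn | hn
  · have h := gaussWeight_mul_pw_eq_mul_one_sub_pw_add_one hσ (n + f)
    rw [jacobiKernel_self_add_one_of_nonneg hn, jacobiKernel_add_one_self_of_nonneg hn, h]
    push_cast
    ring_nf
  · have h := gaussWeight_mul_pw_eq_mul_one_sub_pw_add_one hσ (-n - 1 - f)
    have hg_n : gaussWeight σ (-n - 1 - f + 1) = gaussWeight σ (n + f) := by
      rw [← gaussWeight_neg]
      ring_nf
    have hg_succ : gaussWeight σ (-n - 1 - f) = gaussWeight σ ((n + 1 : ℤ) + f) := by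
      rw [← gaussWeight_neg]
      push_cast
      ring_nf
    rw [hg_n, hg_succ, show -(n : ℝ) - 1 - f + 1 = -n - f by ring] at h
    rw [jacobiKernel_self_add_one_of_neg hn, jacobiKernel_add_one_self_of_neg hn, h]

lemma gaussWeight_mul_jacobiKernel_comm (hσ : σ ≠ 0) (n m : ℤ) :
    gaussWeight σ (n + f) * jacobiKernel σ f n m =
      gaussWeight σ (m + f) * jacobiKernel σ f m n := by
  by_cases h : m ∈ ({n - 1, n, n + 1} : Finset ℤ)
  · simp only [Finset.mem_insert, Finset.mem_singleton] at h
    rcases h with h | rfl | rfl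
    · obtain rfl : n = m + 1 := by omega
      exact (gaussWeight_mul_jacobiKernel_add_one hσ m).symm
    · rfl
    · exact gaussWeight_mul_jacobiKernel_add_one hσ n
  · rw [jacobiKernel_eq_zero h, jacobiKernel_eq_zero]
    · ring
    · simp only [Finset.mem_insert, Finset.mem_singleton, not_or] at h ⊢
      omega

end JacobiKernel

theorem stmt9_general (σ f : ℝ) (hσ : 0 < σ) :
    (rw' σ f = 1 - pw σ f - pw σ (-f)) ∧
    ∀ m : ℤ,
      ∑' n : ℤ, Real.exp (-((n : ℝ) + f) ^ 2 / (2 * σ ^ 2)) * jacobiKernel σ f n m =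
        Real.exp (-((m : ℝ) + f) ^ 2 / (2 * σ ^ 2)) := by
  refine ⟨rw'_eq_one_sub_pw_sub_pw hσ.ne' f, fun m => ?_⟩
  calc ∑' n : ℤ, gaussWeight σ (n + f) * jacobiKernel σ f n m
      = ∑' n : ℤ, gaussWeight σ (m + f) * jacobiKernel σ f m n :=
        tsum_congr fun n => gaussWeight_mul_jacobiKernel_comm hσ.ne' n m
    _ = gaussWeight σ (m + f) := by rw [tsum_mul_left, tsum_jacobiKernel hσ.ne', mul_one]

theorem stmt9 (σ f : ℝ) (hσ : 0 < σ) (hf : f ∈ Set.Icc (-(1:ℝ)/2) (1/2)) :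
    (rw' σ f = 1 - pw σ f - pw σ (-f)) ∧
    ∀ m : ℤ,
      ∑' n : ℤ, Real.exp (-((n : ℝ) + f) ^ 2 / (2 * σ ^ 2)) * jacobiKernel σ f n m =
        Real.exp (-((m : ℝ) + f) ^ 2 / (2 * σ ^ 2)) :=
  stmt9_general σ f hσ
end

section
/- If Z ~ N(0, σ²) and, conditionally on Z, a step J ∈ {-1, 0, 1} is taken according to the 0,±1 walk (Definition of the Jacobi walk with parameters σ and the fractional part f of Z in [-1/2, 1/2)), then Z + J is again distributed as N(0, σ²). -/
open Real

/-- Probability that the `0,±1` walk started at `x` steps `+1`; here `round x` is the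
integer part of `x` with fractional part in `[-1/2, 1/2)`. -/
noncomputable def stepUp (σ x : ℝ) : ℝ :=
  if round x ≤ -1 then 1 - pw σ (-x) else pw σ x

/-- Probability that the walk started at `x` steps `-1`. -/
noncomputable def stepDown (σ x : ℝ) : ℝ :=
  if 1 ≤ round x then 1 - pw σ x else pw σ (-x)

/-- Probability that the walk started at `x` stays put. -/
noncomputable def stepStay (σ x : ℝ) : ℝ :=
  if round x = 0 then rw' σ x else 0

/-- Density of `N(0, σ²)`. -/
noncomputable def gaussPdf (σ x : ℝ) : ℝ :=
  Real.exp (-x ^ 2 / (2 * σ ^ 2)) / (σ * Real.sqrt (2 * Real.pi))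


/-! Write `φ` for the `N(0, σ²)` density and `T c = ∑_{j ≥ 0} (-1)^j φ (c + j)`, so that
`T c + T (c + 1) = φ c`. Completing the square gives `φ x · p_σ(x) = T (x + 1)` and
`φ x · r_σ(x) = T x - T (1 - x)`, so the probability mass `φ · P(step)` leaving each point is a
difference of alternating tails. In each of the three cases `n ≤ -1`, `n = 0`, `n ≥ 1` for the
integer part `n` of `x`, the mass arriving at `x` from `x - 1`, `x`, `x + 1` collapses to
`T c + T (c + 1)` with `c = x` or `c = -x`, which is `φ x`. -/

noncomputable def gaussAltTail (σ c : ℝ) : ℝ :=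
  ∑' j : ℕ, (-1 : ℝ) ^ j * gaussPdf σ (c + j)

lemma gaussPdf_neg (σ x : ℝ) : gaussPdf σ (-x) = gaussPdf σ x := by
  rw [gaussPdf, gaussPdf, neg_sq]

lemma gaussPdf_mul_exp {σ : ℝ} (hσ : σ ≠ 0) (x y : ℝ) :
    gaussPdf σ x * exp (-(y ^ 2 + 2 * x * y) / (2 * σ ^ 2)) = gaussPdf σ (x + y) := by
  rw [gaussPdf, gaussPdf, div_mul_eq_mul_div, ← exp_add]
  congr 2
  field_simp
  ring

lemma summable_exp_neg_mul_sq_nat_add {a : ℝ} (ha : 0 < a) (c : ℝ) :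
    Summable fun j : ℕ => exp (-a * (c + j) ^ 2) := by
  have hgeom : Summable fun j : ℕ => exp (-(a / 2) * (j : ℝ) ^ 2) :=
    summable_exp_nat_mul_of_ge (by linarith) fun j => by exact_mod_cast Nat.le_self_pow two_ne_zero j
  refine (hgeom.mul_left (exp (a * c ^ 2))).of_nonneg_of_le (fun _ => (exp_pos _).le) fun j => ?_
  rw [← exp_add]
  exact exp_le_exp.mpr (by nlinarith [sq_nonneg (2 * c + j)])

lemma summable_gaussPdf_nat_add {σ : ℝ} (hσ : σ ≠ 0) (c : ℝ) :
    Summable fun j : ℕ => gaussPdf σ (c + j) := by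
  refine ((summable_exp_neg_mul_sq_nat_add (a := 1 / (2 * σ ^ 2)) (by positivity) c).div_const
    (σ * √(2 * π))).congr fun j => ?_
  rw [gaussPdf, neg_mul, one_div_mul_eq_div, neg_div]

lemma summable_neg_one_pow_mul_gaussPdf_nat_add {σ : ℝ} (hσ : σ ≠ 0) (c : ℝ) :
    Summable fun j : ℕ => (-1 : ℝ) ^ j * gaussPdf σ (c + j) :=
  (summable_gaussPdf_nat_add hσ c).abs.of_norm_bounded fun j => by simp

lemma hasSum_gaussAltTail {σ : ℝ} (hσ : σ ≠ 0) (c : ℝ) :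
    HasSum (fun j : ℕ => (-1 : ℝ) ^ j * gaussPdf σ (c + j)) (gaussAltTail σ c) :=
  (summable_neg_one_pow_mul_gaussPdf_nat_add hσ c).hasSum

lemma gaussAltTail_add_gaussAltTail_add_one {σ : ℝ} (hσ : σ ≠ 0) (c : ℝ) :
    gaussAltTail σ c + gaussAltTail σ (c + 1) = gaussPdf σ c := by
  rw [gaussAltTail, (summable_neg_one_pow_mul_gaussPdf_nat_add hσ c).tsum_eq_zero_add,
    gaussAltTail]
  have hshift : ∀ j : ℕ, (-1 : ℝ) ^ (j + 1) * gaussPdf σ (c + ↑(j + 1)) =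
      -((-1 : ℝ) ^ j * gaussPdf σ (c + 1 + j)) := fun j => by
    rw [pow_succ, show c + ((j + 1 : ℕ) : ℝ) = c + 1 + j by push_cast; ring]
    ring
  simp only [hshift, tsum_neg, pow_zero, Nat.cast_zero, add_zero, one_mul]
  ring

lemma gaussAltTail_neg_add_gaussAltTail_one_sub {σ : ℝ} (hσ : σ ≠ 0) (c : ℝ) :
    gaussAltTail σ (-c) + gaussAltTail σ (1 - c) = gaussPdf σ c := by
  rw [← gaussPdf_neg, ← gaussAltTail_add_gaussAltTail_add_one hσ, neg_add_eq_sub]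

lemma gaussPdf_mul_pw {σ : ℝ} (hσ : σ ≠ 0) (x : ℝ) :
    gaussPdf σ x * pw σ x = gaussAltTail σ (x + 1) := by
  rw [pw, gaussAltTail, ← tsum_mul_left]
  congr 1 with j
  rw [mul_left_comm, gaussPdf_mul_exp hσ, add_assoc, add_comm (j : ℝ)]

lemma gaussPdf_mul_rw' {σ : ℝ} (hσ : σ ≠ 0) (x : ℝ) :
    gaussPdf σ x * rw' σ x = gaussAltTail σ x - gaussAltTail σ (1 - x) := by
  have hterm : ∀ j : ℤ, gaussPdf σ x * ((-1 : ℝ) ^ j *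
      exp (-(((j : ℝ) ^ 2 + 2 * x * j) / (2 * σ ^ 2)))) = (-1 : ℝ) ^ j * gaussPdf σ (x + j) :=
    fun j => by rw [mul_left_comm, ← neg_div, gaussPdf_mul_exp hσ]
  have hnonneg : HasSum (fun n : ℕ => (-1 : ℝ) ^ (n : ℤ) * gaussPdf σ (x + (n : ℤ)))
      (gaussAltTail σ x) := by
    simpa using hasSum_gaussAltTail hσ x
  have hneg : HasSum
      (fun n : ℕ => (-1 : ℝ) ^ (-((n : ℤ) + 1)) * gaussPdf σ (x + (-((n : ℤ) + 1) : ℤ)))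
      (-gaussAltTail σ (1 - x)) := by
    refine (hasSum_gaussAltTail hσ (1 - x)).neg.congr_fun fun n => ?_
    rw [zpow_neg, ← inv_zpow, inv_neg_one, zpow_add_one₀ (by norm_num), zpow_natCast,
      ← gaussPdf_neg σ (1 - x + n)]
    push_cast
    ring_nf
  rw [rw', ← tsum_mul_left, tsum_congr hterm, sub_eq_add_neg]
  exact (HasSum.of_nat_of_neg_add_one (f := fun j : ℤ => (-1 : ℝ) ^ j * gaussPdf σ (x + j))
    hnonneg hneg).tsum_eq

lemma gaussPdf_mul_pw_neg {σ : ℝ} (hσ : σ ≠ 0) (x : ℝ) :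
    gaussPdf σ x * pw σ (-x) = gaussAltTail σ (1 - x) := by
  rw [← gaussPdf_neg, gaussPdf_mul_pw hσ, neg_add_eq_sub]

lemma gaussPdf_mul_stepUp {σ : ℝ} (hσ : σ ≠ 0) (x : ℝ) :
    gaussPdf σ x * stepUp σ x =
      if round x ≤ -1 then gaussAltTail σ (-x) else gaussAltTail σ (x + 1) := by
  have hsplit := gaussAltTail_neg_add_gaussAltTail_one_sub hσ x
  unfold stepUp
  split_ifs
  · rw [mul_sub, mul_one, gaussPdf_mul_pw_neg hσ]
    linarith
  · exact gaussPdf_mul_pw hσ x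

lemma gaussPdf_mul_stepDown {σ : ℝ} (hσ : σ ≠ 0) (x : ℝ) :
    gaussPdf σ x * stepDown σ x =
      if 1 ≤ round x then gaussAltTail σ x else gaussAltTail σ (1 - x) := by
  have hsplit := gaussAltTail_add_gaussAltTail_add_one hσ x
  unfold stepDown
  split_ifs
  · rw [mul_sub, mul_one, gaussPdf_mul_pw hσ]
    linarith
  · exact gaussPdf_mul_pw_neg hσ x

lemma gaussPdf_mul_stepStay {σ : ℝ} (hσ : σ ≠ 0) (x : ℝ) :
    gaussPdf σ x * stepStay σ x =
      if round x = 0 then gaussAltTail σ x - gaussAltTail σ (1 - x) else 0 := by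
  unfold stepStay
  split_ifs
  · exact gaussPdf_mul_rw' hσ x
  · exact mul_zero _

/-- If `Z ∼ N(0,σ²)` and `J` is a step of the Jacobi `0,±1` walk given `Z`, then
`Z + J ∼ N(0,σ²)`: the density of `Z + J` at every point `x` equals the Gaussian density. -/
theorem stmt10 (σ : ℝ) (hσ : 0 < σ) (x : ℝ) :
    gaussPdf σ (x - 1) * stepUp σ (x - 1) + gaussPdf σ x * stepStay σ x +
      gaussPdf σ (x + 1) * stepDown σ (x + 1) = gaussPdf σ x := by
  have hσ₀ := hσ.ne'
  have hright := gaussAltTail_add_gaussAltTail_add_one hσ₀ x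
  have hleft := gaussAltTail_neg_add_gaussAltTail_one_sub hσ₀ x
  rw [gaussPdf_mul_stepUp hσ₀, gaussPdf_mul_stepStay hσ₀, gaussPdf_mul_stepDown hσ₀,
    round_sub_one, round_add_one, neg_sub, sub_add_cancel, sub_add_eq_sub_sub, sub_sub_cancel_left]
  rcases lt_trichotomy (round x) 0 with hx | hx | hx
  · rw [if_pos (by omega), if_neg (by omega), if_neg (by omega)]
    linarith
  · rw [if_pos (by omega), if_pos hx, if_pos (by omega)]
    linarith
  · rw [if_neg (by omega), if_neg (by omega), if_pos (by omega)]
    linarith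
end

section
/- For σ ≥ 1 and f ∈ [-1/2, 1/2], p_σ(1+f) ≥ r_σ(f)·exp((2f+1)/(2σ²)), where p_σ(x) = ∑_{j≥1} (-1)^{j-1} exp(-(j²+2xj)/(2σ²)) and r_σ(f) = ∑_{j∈ℤ} (-1)^j exp(-(j²+2fj)/(2σ²)). -/
/-! With `s = 2σ²`, `c = 1 + f` and `g k = (-1)^k exp(-(k² + 2ck)/s)`, shifting the summation
index by one turns the claim into `∑_{k ≤ 0} g k ≥ 0`, that is `b₁ - b₂ + b₃ - ⋯ ≤ 1` for
`bₙ = exp((2cn - n²)/s)`. As `c ≤ 3/2`, the `bₙ` decrease, so the alternating series is at most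
`b₁ - b₂ + b₃`; in terms of `X = exp((2c - 3)/s) ≤ 1` and `Y = exp(-2/s) ≥ 1/3` this is
`X/Y - X²/Y + X³ ≤ 1`. -/

open Real

noncomputable def altGaussTerm (s c : ℝ) (k : ℤ) : ℝ :=
  (-1 : ℝ) ^ k * exp (-((k : ℝ) ^ 2 + 2 * c * k) / s)

lemma norm_altGaussTerm (s c : ℝ) (k : ℤ) :
    ‖altGaussTerm s c k‖ = exp (-((k : ℝ) ^ 2 + 2 * c * k) / s) := by
  simp [altGaussTerm, norm_zpow]

lemma summable_altGaussTerm {s : ℝ} (hs : 0 < s) (c : ℝ) : Summable (altGaussTerm s c) := by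
  have hθ := (summable_jacobiTheta₂_term_iff ((c / (π * s) : ℝ) * Complex.I)
    ((1 / (π * s) : ℝ) * Complex.I)).2 <| by
      simp only [Complex.mul_I_im, Complex.ofReal_re]
      positivity
  refine Summable.of_norm (hθ.norm.congr fun k => ?_)
  rw [norm_jacobiTheta₂_term, norm_altGaussTerm]
  simp only [Complex.mul_I_im, Complex.ofReal_re]
  congr 1
  field_simp
  ring

lemma injective_neg_natCast_add_one : Function.Injective fun n : ℕ => -((n : ℤ) + 1) :=
  fun _ _ h => by simpa using h

lemma tsum_altGaussTerm_eq {s : ℝ} (hs : 0 < s) (c : ℝ) :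
    ∑' k : ℤ, altGaussTerm s c k =
      1 + ∑' n : ℕ, altGaussTerm s c ((n : ℤ) + 1) +
        ∑' n : ℕ, altGaussTerm s c (-((n : ℤ) + 1)) := by
  have hg := summable_altGaussTerm hs c
  have hpos : Summable fun n : ℕ => altGaussTerm s c n := hg.comp_injective Nat.cast_injective
  have hneg : Summable fun n : ℕ => altGaussTerm s c (-((n : ℤ) + 1)) :=
    hg.comp_injective injective_neg_natCast_add_one
  rw [tsum_of_nat_of_neg_add_one hpos hneg, hpos.tsum_eq_zero_add]
  simp [altGaussTerm]

lemma rw'_mul_exp_eq (σ f : ℝ) :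
    rw' σ f * exp ((2 * f + 1) / (2 * σ ^ 2)) =
      -∑' k : ℤ, altGaussTerm (2 * σ ^ 2) (1 + f) k := by
  rw [rw', ← tsum_mul_right, ← (Equiv.subRight (1 : ℤ)).tsum_eq (altGaussTerm _ _), ← tsum_neg]
  refine tsum_congr fun j => ?_
  simp only [Equiv.subRight_apply, altGaussTerm, zpow_sub_one₀ (by norm_num : (-1 : ℝ) ≠ 0),
    Int.cast_sub, Int.cast_one]
  rw [mul_assoc, ← exp_add]
  field_simp
  ring_nf

lemma pw_eq (σ x : ℝ) : pw σ x = -∑' n : ℕ, altGaussTerm (2 * σ ^ 2) x ((n : ℤ) + 1) := by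
  rw [pw, ← tsum_neg]
  refine tsum_congr fun n => ?_
  simp only [altGaussTerm, zpow_add_one₀ (by norm_num : (-1 : ℝ) ≠ 0), zpow_natCast]
  push_cast
  ring

lemma tsum_neg_one_pow_mul_le_of_antitone {d : ℕ → ℝ} (hd : Antitone d) (hs : Summable d) :
    ∑' n, (-1 : ℝ) ^ n * d n ≤ d 0 - d 1 + d 2 := by
  have h := hd.tendsto_le_alternating_series hs.tendsto_alternating_series_tsum 1
  simpa [Finset.sum_range_succ, sub_eq_add_neg] using h

lemma div_sub_sq_div_add_cube_le_one {X Y : ℝ} (hX0 : 0 ≤ X) (hX1 : X ≤ 1) (hY : 1 / 3 ≤ Y) :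
    X / Y - X ^ 2 / Y + X ^ 3 ≤ 1 := by
  have hY0 : 0 < Y := by linarith
  rw [div_sub_div_same, div_add' _ _ _ hY0.ne', div_le_one hY0]
  -- `Y - X + X² - X³Y = (1 - X) (Y (1 + X + X²) - X)` and `(1 + X + X²) / 3 ≥ X`
  nlinarith [mul_nonneg (sub_nonneg.2 hX1) (sq_nonneg (1 - X)),
    mul_nonneg (sub_nonneg.2 hX1)
      (mul_nonneg (sub_nonneg.2 hY) (by positivity : 0 ≤ 1 + X + X ^ 2))]

lemma exp_sub_exp_add_exp_le_one {s c : ℝ} (hs : 2 ≤ s) (hc : c ≤ 3 / 2) :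
    exp ((2 * c - 1) / s) - exp ((4 * c - 4) / s) + exp ((6 * c - 9) / s) ≤ 1 := by
  have hs0 : 0 < s := by linarith
  set X := exp ((2 * c - 3) / s)
  set Y := exp (-2 / s)
  have hX1 : X ≤ 1 := exp_le_one_iff.2 (div_nonpos_of_nonpos_of_nonneg (by linarith) hs0.le)
  have hY : 1 / 3 ≤ Y := calc
    1 / 3 ≤ exp (-1) := by
      rw [exp_neg, one_div]
      exact inv_anti₀ (exp_pos 1) (exp_one_lt_d9.le.trans (by norm_num))
    _ ≤ Y := exp_le_exp.2 (by rw [le_div_iff₀ hs0]; linarith)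
  have h1 : exp ((2 * c - 1) / s) = X / Y := by rw [← exp_sub]; ring_nf
  have h2 : exp ((4 * c - 4) / s) = X ^ 2 / Y := by rw [sq, ← exp_add, ← exp_sub]; ring_nf
  have h3 : exp ((6 * c - 9) / s) = X ^ 3 := by rw [pow_three, ← exp_add, ← exp_add]; ring_nf
  rw [h1, h2, h3]
  exact div_sub_sq_div_add_cube_le_one (exp_pos _).le hX1 hY

lemma neg_one_le_tsum_altGaussTerm_neg {s c : ℝ} (hs : 2 ≤ s) (hc : c ≤ 3 / 2) :
    -1 ≤ ∑' n : ℕ, altGaussTerm s c (-((n : ℤ) + 1)) := by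
  set d : ℕ → ℝ := fun n => exp ((2 * c * ((n : ℝ) + 1) - ((n : ℝ) + 1) ^ 2) / s)
  have hterm (n : ℕ) : altGaussTerm s c (-((n : ℤ) + 1)) = -((-1) ^ n * d n) := by
    have hsign : (-1 : ℝ) ^ (-((n : ℤ) + 1)) = -(-1) ^ n := by
      rw [zpow_neg, zpow_add_one₀ (by norm_num), zpow_natCast, mul_neg_one, inv_neg, ← inv_pow,
        inv_neg, inv_one]
    simp only [altGaussTerm, hsign, d]
    push_cast
    ring_nf
  have hd : Antitone d := antitone_nat_of_succ_le fun n =>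
    exp_le_exp.2 (div_le_div_of_nonneg_right (by push_cast; nlinarith) (by linarith))
  have hsum : Summable d := by
    refine ((summable_altGaussTerm (by linarith : (0 : ℝ) < s) c).comp_injective
      injective_neg_natCast_add_one).norm.congr fun n => ?_
    simp only [Function.comp_apply, norm_altGaussTerm, d]
    push_cast
    ring_nf
  have hvals : d 0 - d 1 + d 2 =
      exp ((2 * c - 1) / s) - exp ((4 * c - 4) / s) + exp ((6 * c - 9) / s) := by
    norm_num [d]
    ring_nf
  rw [tsum_congr hterm, tsum_neg]
  linarith [tsum_neg_one_pow_mul_le_of_antitone hd hsum, exp_sub_exp_add_exp_le_one hs hc]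

theorem stmt11 (σ f : ℝ) (hσ : 1 ≤ σ) (hf : f ∈ Set.Icc (-(1:ℝ)/2) (1/2)) :
    rw' σ f * Real.exp ((2 * f + 1) / (2 * σ ^ 2)) ≤ pw σ (1 + f) := by
  have hs : 2 ≤ 2 * σ ^ 2 := by nlinarith
  rw [rw'_mul_exp_eq, pw_eq, tsum_altGaussTerm_eq (by linarith)]
  linarith [neg_one_le_tsum_altGaussTerm_neg hs (by linarith [hf.2] : 1 + f ≤ 3 / 2)]
end

section
/- For σ ∈ [1, 2] and f ∈ [-1/2, 1/2], p_σ(1+f) ≥ exp(-(3+2f)/(2σ²)) - exp(-(4+2f)/σ²) ≥ 0.12, where p_σ(x) = ∑_{j≥1} (-1)^{j-1} exp(-(j²+2xj)/(2σ²)). -/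
/-!
The terms of the alternating series `pw σ x` decrease in `j`, so the series is bounded below by
its first term minus its second. Writing `t = exp (-(3 + 2f) / (2σ²))`, the second term is
`t² exp (-1/σ²) ≤ e^{-1/4} t²`, while on the rectangle `t` ranges over `[e^{-2}, e^{-1/4}]`; the concave
function `t - e^{-1/4} t²` is smallest at the endpoint `t = e^{-2}`, where it still exceeds `0.12`.
-/

open Real

lemma sub_le_tsum_alternating {E : Type*} [Ring E] [LinearOrder E] [IsOrderedRing E]
    [UniformSpace E] [IsUniformAddGroup E] [CompleteSpace E] [OrderClosedTopology E]
    {a : ℕ → E} (ha : Antitone a) (hs : Summable a) :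
    a 0 - a 1 ≤ ∑' j, (-1) ^ j * a j := by
  have h := ha.alternating_series_le_tendsto hs.tendsto_alternating_series_tsum 1
  simpa [Finset.sum_range_succ, sub_eq_add_neg] using h

noncomputable def pwTerm (σ x : ℝ) (j : ℕ) : ℝ :=
  exp (-(((j : ℝ) + 1) ^ 2 + 2 * x * ((j : ℝ) + 1)) / (2 * σ ^ 2))

lemma pw_eq_tsum_pwTerm (σ x : ℝ) : pw σ x = ∑' j, (-1) ^ j * pwTerm σ x j := rfl

lemma pwTerm_antitone (σ : ℝ) {x : ℝ} (hx : -3 / 2 ≤ x) : Antitone (pwTerm σ x) := by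
  refine antitone_nat_of_succ_le fun n ↦ exp_le_exp.2 ?_
  have hn : (0 : ℝ) ≤ n := n.cast_nonneg
  rw [neg_div, neg_div, neg_le_neg_iff]
  gcongr ?_ / _
  push_cast
  nlinarith

lemma summable_pwTerm {σ x : ℝ} (hσ : σ ≠ 0) (hx : -1 / 2 ≤ x) : Summable (pwTerm σ x) := by
  have hc : -1 / (2 * σ ^ 2) < 0 := div_neg_of_neg_of_pos neg_one_lt_zero (by positivity)
  refine (summable_exp_nat_mul_of_ge hc (f := fun j : ℕ ↦ ((j : ℝ) + 1) ^ 2 + 2 * x * ((j : ℝ) + 1))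
    fun j ↦ ?_).congr fun j ↦ ?_
  · have hj : (0 : ℝ) ≤ j := j.cast_nonneg
    nlinarith
  · rw [pwTerm]
    congr 1
    ring

lemma sub_le_pw {σ x : ℝ} (hσ : σ ≠ 0) (hx : -1 / 2 ≤ x) :
    exp (-(1 + 2 * x) / (2 * σ ^ 2)) - exp (-(2 + 2 * x) / σ ^ 2) ≤ pw σ x := by
  have h := sub_le_tsum_alternating (pwTerm_antitone σ (by linarith)) (summable_pwTerm hσ hx)
  have h₀ : pwTerm σ x 0 = exp (-(1 + 2 * x) / (2 * σ ^ 2)) := by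
    rw [pwTerm]
    congr 1
    push_cast
    ring
  have h₁ : pwTerm σ x 1 = exp (-(2 + 2 * x) / σ ^ 2) := by
    rw [pwTerm]
    congr 1
    push_cast
    field_simp
    ring
  rwa [h₀, h₁, ← pw_eq_tsum_pwTerm] at h

lemma exp_neg_two_gt : 0.1353 < exp (-2) := by
  have h := exp_neg_one_gt_d9
  rw [show (-2 : ℝ) = -1 + -1 by norm_num, exp_add]
  nlinarith

lemma exp_neg_one_div_four_lt : exp (-1 / 4) < 0.78 := by
  rw [← pow_lt_pow_iff_left₀ (exp_pos _).le (by norm_num) (by norm_num : 4 ≠ 0), ← exp_nat_mul]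
  have h := exp_neg_one_lt_d9
  norm_num at h ⊢
  linarith

lemma le_sub_mul_sq {c t : ℝ} (hc : c ≤ 0.78) (ht₁ : 0.1353 ≤ t) (ht₂ : t ≤ 0.78) :
    0.12 ≤ t - c * t ^ 2 := by
  nlinarith [mul_nonneg (sub_nonneg.2 ht₁) (sub_nonneg.2 ht₂)]

lemma le_exp_sub_exp {σ f : ℝ} (hσ : σ ∈ Set.Icc (1 : ℝ) 2) (hf : f ∈ Set.Icc (-(1 : ℝ) / 2) (1 / 2)) :
    (0.12 : ℝ) ≤ exp (-(3 + 2 * f) / (2 * σ ^ 2)) - exp (-(4 + 2 * f) / σ ^ 2) := by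
  obtain ⟨hσ₁, hσ₂⟩ := hσ
  obtain ⟨hf₁, hf₂⟩ := hf
  have hσsq₁ : 1 ≤ σ ^ 2 := by nlinarith
  have hσsq₄ : σ ^ 2 ≤ 4 := by nlinarith
  set t := exp (-(3 + 2 * f) / (2 * σ ^ 2))
  have hsecond : exp (-(4 + 2 * f) / σ ^ 2) = exp (-1 / σ ^ 2) * t ^ 2 := by
    rw [← exp_nat_mul, ← exp_add]
    congr 1
    field_simp
    ring
  have hquarter : exp (-1 / σ ^ 2) ≤ exp (-1 / 4) := by
    refine exp_le_exp.2 ?_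
    rw [div_le_div_iff₀ (by positivity) (by norm_num)]
    linarith
  have ht_lower : exp (-2) ≤ t := by
    refine exp_le_exp.2 ?_
    rw [le_div_iff₀ (by positivity)]
    nlinarith
  have ht_upper : t ≤ exp (-1 / 4) := by
    refine exp_le_exp.2 ?_
    rw [div_le_div_iff₀ (by positivity) (by norm_num)]
    nlinarith
  rw [hsecond]
  exact le_sub_mul_sq (hquarter.trans exp_neg_one_div_four_lt.le)
    (exp_neg_two_gt.le.trans ht_lower) (ht_upper.trans exp_neg_one_div_four_lt.le)

theorem stmt12 (σ f : ℝ) (hσ : σ ∈ Set.Icc (1:ℝ) 2) (hf : f ∈ Set.Icc (-(1:ℝ)/2) (1/2)) :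
    Real.exp (-(3 + 2 * f) / (2 * σ ^ 2)) - Real.exp (-(4 + 2 * f) / σ ^ 2) ≤ pw σ (1 + f) ∧
    (0.12 : ℝ) ≤ Real.exp (-(3 + 2 * f) / (2 * σ ^ 2)) - Real.exp (-(4 + 2 * f) / σ ^ 2) := by
  refine ⟨?_, le_exp_sub_exp hσ hf⟩
  have h := sub_le_pw (x := 1 + f) (by linarith [hσ.1] : σ ≠ 0) (by linarith [hf.1])
  convert h using 4 <;> ring
end

section
/- For f ∈ [-1/2, 1/2], 1 - r_1(f) ≥ 0.9639, where r_1(f) = ∑_{j∈ℤ} (-1)^j exp(-(j²+2fj)/2). -/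
open Real

/-!
Pairing the terms `j` and `-j` writes `r_σ(f) + 1` as an alternating series `∑ (-1)ⁿ aₙ` with
`aₙ = 2 exp (-n² / 2σ²) cosh (n f / σ²)`. For `|f| ≤ 1/2` the `aₙ` decrease, since
`aₙ₊₁ / aₙ ≤ exp ((2|f| - 2n - 1) / 2σ²)`, so `r_σ(f) ≤ a₀ - a₁ + a₂ - a₃ + a₄ - 1`.
At `σ = 1` this bound is a quartic in `C = cosh f ∈ [1, cosh (1/2)]`, which decreases in `C`;
its value at `C = 1`, the truncation of `r_1(0) ≈ 0.03606`, is below `0.0361`.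
-/

open Finset

noncomputable def rwTerm (σ f : ℝ) (j : ℤ) : ℝ :=
  (-1 : ℝ) ^ j * exp (-(((j : ℝ) ^ 2 + 2 * f * (j : ℝ)) / (2 * σ ^ 2)))

noncomputable def rwPairTerm (σ f : ℝ) (n : ℕ) : ℝ :=
  2 * exp (-((n : ℝ) ^ 2 / (2 * σ ^ 2))) * cosh (n * f / σ ^ 2)

lemma summable_rwTerm {σ : ℝ} (hσ : σ ≠ 0) (f : ℝ) : Summable (rwTerm σ f) := by
  have hT : 0 < 1 / (2 * π * σ ^ 2) := by positivity
  refine (summable_pow_mul_jacobiTheta₂_term_bound (|f| / (2 * π * σ ^ 2)) hT 0).of_norm_bounded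
    fun n ↦ ?_
  have hfn : -(f * n) ≤ |f| * |(n : ℝ)| := abs_mul f n ▸ neg_le_abs _
  have hexponent : -π * (1 / (2 * π * σ ^ 2) * (n : ℝ) ^ 2 - 2 * (|f| / (2 * π * σ ^ 2)) * |n|)
      = (-(n : ℝ) ^ 2 + 2 * (|f| * |(n : ℝ)|)) / (2 * σ ^ 2) := by
    rw [Int.cast_abs]; field_simp; ring
  rw [rwTerm, norm_mul, norm_zpow, norm_neg, norm_one, one_zpow, one_mul, norm_of_nonneg
    (exp_pos _).le, pow_zero, one_mul, exp_le_exp, hexponent, ← neg_div,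
    div_le_div_iff_of_pos_right (by positivity)]
  linarith

lemma rwTerm_add_rwTerm_neg (σ f : ℝ) (n : ℕ) :
    rwTerm σ f n + rwTerm σ f (-n) = (-1) ^ n * rwPairTerm σ f n := by
  rw [rwTerm, rwTerm, rwPairTerm, zpow_neg, zpow_natCast, cosh_eq, ← inv_pow, inv_neg, inv_one]
  push_cast
  ring_nf
  simp only [← exp_add]
  ring_nf

lemma hasSum_rwPairTerm {σ : ℝ} (hσ : σ ≠ 0) (f : ℝ) :
    HasSum (fun n : ℕ ↦ (-1) ^ n * rwPairTerm σ f n) (rw' σ f + 1) := by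
  have h := (summable_rwTerm hσ f).hasSum.nat_add_neg
  simp only [rwTerm_add_rwTerm_neg] at h
  convert h using 1
  simp [rw', rwTerm]

lemma cosh_add_le (a b : ℝ) : cosh (a + b) ≤ cosh a * exp |b| := by
  have h1 : exp b ≤ exp |b| := exp_le_exp.2 (le_abs_self b)
  have h2 : exp (-b) ≤ exp |b| := exp_le_exp.2 (neg_le_abs b)
  rw [cosh_eq, cosh_eq, neg_add, exp_add, exp_add]
  nlinarith [exp_pos a, exp_pos (-a)]

lemma antitone_rwPairTerm (σ : ℝ) {f : ℝ} (hf : |f| ≤ 1 / 2) : Antitone (rwPairTerm σ f) := by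
  refine antitone_nat_of_succ_le fun n ↦ ?_
  have hcosh : cosh ((n + 1 : ℕ) * f / σ ^ 2) ≤ cosh (n * f / σ ^ 2) * exp (|f| / σ ^ 2) := by
    convert cosh_add_le (n * f / σ ^ 2) (f / σ ^ 2) using 2
    · push_cast; ring
    · rw [abs_div, abs_of_nonneg (sq_nonneg σ)]
  have hexponent : -(((n + 1 : ℕ) : ℝ) ^ 2 / (2 * σ ^ 2)) + |f| / σ ^ 2
      = -((n : ℝ) ^ 2 / (2 * σ ^ 2)) + (2 * |f| - (2 * n + 1)) / (2 * σ ^ 2) := by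
    push_cast; ring
  have hexp : exp (-(((n + 1 : ℕ) : ℝ) ^ 2 / (2 * σ ^ 2))) * exp (|f| / σ ^ 2)
      ≤ exp (-((n : ℝ) ^ 2 / (2 * σ ^ 2))) := by
    rw [← exp_add, exp_le_exp, hexponent, add_le_iff_nonpos_right]
    exact div_nonpos_of_nonpos_of_nonneg (by linarith [(n.cast_nonneg : (0 : ℝ) ≤ n)])
      (by positivity)
  calc rwPairTerm σ f (n + 1)
      ≤ 2 * exp (-(((n + 1 : ℕ) : ℝ) ^ 2 / (2 * σ ^ 2))) *
          (cosh (n * f / σ ^ 2) * exp (|f| / σ ^ 2)) := by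
        rw [rwPairTerm]; gcongr
    _ = 2 * (exp (-(((n + 1 : ℕ) : ℝ) ^ 2 / (2 * σ ^ 2))) * exp (|f| / σ ^ 2)) *
          cosh (n * f / σ ^ 2) := by ring
    _ ≤ rwPairTerm σ f n := by
        rw [rwPairTerm]; gcongr

lemma rw'_le_sum_range {σ : ℝ} (hσ : σ ≠ 0) {f : ℝ} (hf : |f| ≤ 1 / 2) (k : ℕ) :
    rw' σ f ≤ ∑ i ∈ range (2 * k + 1), (-1) ^ i * rwPairTerm σ f i - 1 := by
  have := (antitone_rwPairTerm σ hf).tendsto_le_alternating_series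
    (hasSum_rwPairTerm hσ f).tendsto_sum_nat k
  linarith

lemma cosh_two_mul' (x : ℝ) : cosh (2 * x) = 2 * cosh x ^ 2 - 1 := by
  rw [cosh_two_mul, cosh_sq]; ring

lemma cosh_four_mul (x : ℝ) : cosh (4 * x) = 8 * cosh x ^ 4 - 8 * cosh x ^ 2 + 1 := by
  rw [show 4 * x = 2 * (2 * x) by ring, cosh_two_mul', cosh_two_mul']; ring

/-- `1 + 2 ∑_{n=1}^{4} (-1)ⁿ x^{n²} Tₙ(C)` with the Chebyshev polynomials `Tₙ`, so that
`cosh (n f) = Tₙ (cosh f)` turns the partial sum `a₀ - a₁ + a₂ - a₃ + a₄ - 1` of `r_1(f)` into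
`thetaQuartic (exp (-1/2)) (cosh f)`. -/
def thetaQuartic (x C : ℝ) : ℝ :=
  1 - 2 * x * C + 2 * x ^ 4 * (2 * C ^ 2 - 1) - 2 * x ^ 9 * (4 * C ^ 3 - 3 * C)
    + 2 * x ^ 16 * (8 * C ^ 4 - 8 * C ^ 2 + 1)

lemma rwPairTerm_one (f : ℝ) (n : ℕ) :
    rwPairTerm 1 f n = 2 * exp (-(1 / 2)) ^ (n ^ 2) * cosh (n * f) := by
  rw [rwPairTerm, ← exp_nat_mul]
  push_cast
  ring_nf

lemma sum_range_five_rwPairTerm_one (f : ℝ) :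
    ∑ i ∈ range 5, (-1) ^ i * rwPairTerm 1 f i - 1 = thetaQuartic (exp (-(1 / 2))) (cosh f) := by
  simp only [sum_range_succ, sum_range_zero, rwPairTerm_one]
  norm_num [cosh_two_mul', cosh_three_mul, cosh_four_mul, thetaQuartic]
  ring

lemma thetaQuartic_one_le {x : ℝ} (hx : 0 < x) (hx2l : 0.36787944116 < x ^ 2)
    (hx2u : x ^ 2 < 0.3678794412) : thetaQuartic x 1 ≤ 0.0361 := by
  have hxl : 0.6065306 ≤ x := by nlinarith
  have h4 : x ^ 4 ≤ 0.3678794412 ^ 2 := by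
    rw [show x ^ 4 = (x ^ 2) ^ 2 by ring]; gcongr
  have h9 : 0.36787944116 ^ 4 * 0.6065306 ≤ x ^ 9 := by
    rw [show x ^ 9 = (x ^ 2) ^ 4 * x by ring]; gcongr
  have h16 : x ^ 16 ≤ 0.3678794412 ^ 8 := by
    rw [show x ^ 16 = (x ^ 2) ^ 8 by ring]; gcongr
  norm_num [thetaQuartic] at h4 h9 h16 ⊢
  linarith

lemma thetaQuartic_le_thetaQuartic_one {x C : ℝ} (hx : 0 < x) (hx2l : 0.36787944116 < x ^ 2)
    (hx2u : x ^ 2 < 0.3678794412) (hC : 1 ≤ C) (hCx : 2 * x * C ≤ 1 + x ^ 2) :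
    thetaQuartic x C ≤ thetaQuartic x 1 := by
  have hxl : 0.6065306 ≤ x := by nlinarith
  have hxu : x ≤ 0.6065307 := by nlinarith
  have hCu : C ≤ 1.128 := by nlinarith
  have h3 : x ^ 3 ≤ 0.6065307 ^ 3 := by gcongr
  have h4 : x ^ 4 ≤ 0.6065307 ^ 4 := by gcongr
  have h5 : x ^ 5 ≤ 0.6065307 ^ 5 := by gcongr
  have h4C : 4 * x ^ 4 * (C + 1) ≤ 2 * x ^ 3 * (1 + x ^ 2) + 4 * x ^ 4 := by
    have := pow_pos hx 3; nlinarith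
  have h9 : 0 ≤ x ^ 9 := by positivity
  have h9C : 0 ≤ x ^ 9 * (C ^ 2 + C - 2) := mul_nonneg h9 (by nlinarith)
  have h16C : x ^ 16 * (C ^ 3 + C ^ 2) ≤ 0.3678794412 ^ 8 * (1.128 ^ 3 + 1.128 ^ 2) := by
    rw [show x ^ 16 = (x ^ 2) ^ 8 by ring]; gcongr
  have hslope : -2 * x + 4 * x ^ 4 * (C + 1) - 8 * x ^ 9 * (C ^ 2 + C + 1) + 6 * x ^ 9
      + 16 * x ^ 16 * (C ^ 3 + C ^ 2) ≤ 0 := by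
    norm_num at h3 h4 h5 h16C
    linarith
  have hdiff : thetaQuartic x C - thetaQuartic x 1 = (C - 1) * (-2 * x + 4 * x ^ 4 * (C + 1)
      - 8 * x ^ 9 * (C ^ 2 + C + 1) + 6 * x ^ 9 + 16 * x ^ 16 * (C ^ 3 + C ^ 2)) := by
    rw [thetaQuartic, thetaQuartic]; ring
  nlinarith

lemma two_mul_exp_neg_half_mul_cosh_le {f : ℝ} (hf : |f| ≤ 1 / 2) :
    2 * exp (-(1 / 2)) * cosh f ≤ 1 + exp (-(1 / 2)) ^ 2 := by
  have hcosh : cosh f ≤ cosh (1 / 2) :=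
    cosh_le_cosh.2 (by rwa [abs_of_pos (one_half_pos : (0 : ℝ) < 1 / 2)])
  have hexp : exp (-(1 / 2)) * exp (1 / 2) = 1 := by rw [← exp_add]; norm_num
  calc 2 * exp (-(1 / 2)) * cosh f ≤ 2 * exp (-(1 / 2)) * cosh (1 / 2) := by gcongr
    _ = 1 + exp (-(1 / 2)) ^ 2 := by rw [cosh_eq]; linear_combination hexp

theorem stmt15 (f : ℝ) (hf : f ∈ Set.Icc (-(1:ℝ)/2) (1/2)) :
    (0.9639 : ℝ) ≤ 1 - rw' 1 f := by
  have hf' : |f| ≤ 1 / 2 := abs_le.2 ⟨by linarith [hf.1], hf.2⟩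
  have hx2 : exp (-(1 / 2)) ^ 2 = exp (-1) := by rw [← exp_nat_mul]; norm_num
  have hx2l : 0.36787944116 < exp (-(1 / 2)) ^ 2 := hx2 ▸ exp_neg_one_gt_d9
  have hx2u : exp (-(1 / 2)) ^ 2 < 0.3678794412 := hx2 ▸ exp_neg_one_lt_d9
  have hpartial := rw'_le_sum_range one_ne_zero hf' 2
  rw [sum_range_five_rwPairTerm_one] at hpartial
  have hmono := thetaQuartic_le_thetaQuartic_one (exp_pos _) hx2l hx2u (one_le_cosh f)
    (two_mul_exp_neg_half_mul_cosh_le hf')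
  have hvalue := thetaQuartic_one_le (exp_pos _) hx2l hx2u
  linarith
end

section
/- For σ ≥ 1/2, r_σ(0) = ∑_{j∈ℤ} (-1)^j exp(-j²/(2σ²)) ≤ exp(-σ²). -/
/-!
Poisson summation turns the alternating Gaussian sum into a theta sum over half-integers,
`r_σ(0) = √(2πσ²) ∑_{n ∈ ℤ} exp(-2π²σ²(n - 1/2)²)`, whose terms decay like
`exp(-π²σ²/2) exp(-2π²σ²)^m`. Since `π²/2 > 1`, the Gaussian factor beats both the prefactor
`√(2π) σ` and `exp(-σ²)` as soon as `σ ≥ 1/2`.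
-/

open Real

open Complex in
lemma rw'_zero_eq_sqrt_mul_tsum {σ : ℝ} (hσ : σ ≠ 0) :
    rw' σ 0 =
      √(2 * π * σ ^ 2) * ∑' n : ℤ, Real.exp (-(2 * π ^ 2 * σ ^ 2) * ((n : ℝ) - 1 / 2) ^ 2) := by
  set r : ℝ := 2 * π * σ ^ 2 with hr
  have hr0 : 0 < r := by positivity
  -- Poisson summation with `a = r⁻¹`, `b = i/2`; the sign `(-1)ⁿ` is `exp(πin)`.
  have key := tsum_exp_neg_quadratic (a := ((r⁻¹ : ℝ) : ℂ)) (by simpa using hr0) (I / 2)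
  have hlhs (n : ℤ) : cexp (-π * ((r⁻¹ : ℝ) : ℂ) * n ^ 2 + 2 * π * (I / 2) * n) =
      (((-1 : ℝ) ^ n * Real.exp (-(((n : ℝ) ^ 2 + 2 * 0 * n) / (2 * σ ^ 2))) : ℝ) : ℂ) := by
    rw [show -π * ((r⁻¹ : ℝ) : ℂ) * n ^ 2 + 2 * π * (I / 2) * n =
        ((-(((n : ℝ) ^ 2 + 2 * 0 * n) / (2 * σ ^ 2)) : ℝ) : ℂ) + n * (π * I) by
      push_cast [hr]; field_simp; ring,
      Complex.exp_add, exp_int_mul, exp_pi_mul_I]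
    push_cast [ofReal_exp]
    ring
  have hsqrt : 1 / ((r⁻¹ : ℝ) : ℂ) ^ (1 / 2 : ℂ) = ((√r : ℝ) : ℂ) := by
    rw [← ofReal_ofNat, ← ofReal_one, ← ofReal_div, ← ofReal_cpow (by positivity), ← ofReal_div,
      inv_rpow hr0.le, ← sqrt_eq_rpow, one_div, inv_inv]
  have hrhs (n : ℤ) : cexp (-π / ((r⁻¹ : ℝ) : ℂ) * (n + I * (I / 2)) ^ 2) =
      ((Real.exp (-(2 * π ^ 2 * σ ^ 2) * ((n : ℝ) - 1 / 2) ^ 2) : ℝ) : ℂ) := by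
    rw [ofReal_exp, mul_div_assoc', I_mul_I]
    push_cast [hr]
    field_simp
    ring_nf
  simp only [hlhs, hrhs, hsqrt, ← ofReal_tsum, ← ofReal_mul] at key
  exact ofReal_injective key

lemma exp_neg_mul_add_half_sq_le {c : ℝ} (hc : 0 ≤ c) (m : ℕ) :
    exp (-c * ((m : ℝ) + 1 / 2) ^ 2) ≤ exp (-c / 4) * exp (-c) ^ m := by
  rw [← exp_nat_mul, ← exp_add, exp_le_exp]
  nlinarith [sq_nonneg (m : ℝ), mul_nonneg hc (sq_nonneg (m : ℝ))]

lemma summable_exp_neg_mul_add_half_sq {c : ℝ} (hc : 0 < c) :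
    Summable fun m : ℕ ↦ exp (-c * ((m : ℝ) + 1 / 2) ^ 2) :=
  .of_nonneg_of_le (fun _ ↦ (exp_pos _).le) (exp_neg_mul_add_half_sq_le hc.le)
    ((summable_geometric_of_lt_one (exp_pos _).le (exp_lt_one_iff.mpr (by linarith))).mul_left _)

lemma tsum_exp_neg_mul_add_half_sq_le {c : ℝ} (hc : 0 < c) :
    ∑' m : ℕ, exp (-c * ((m : ℝ) + 1 / 2) ^ 2) ≤ exp (-c / 4) / (1 - exp (-c)) := by
  have hq : exp (-c) < 1 := exp_lt_one_iff.mpr (by linarith)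
  rw [div_eq_mul_inv (exp _), ← tsum_geometric_of_lt_one (exp_pos _).le hq, ← tsum_mul_left]
  exact Summable.tsum_le_tsum (exp_neg_mul_add_half_sq_le hc.le)
    (summable_exp_neg_mul_add_half_sq hc)
    ((summable_geometric_of_lt_one (exp_pos _).le hq).mul_left _)

/-- The theta sum at half-integers is symmetric under `n ↦ 1 - n`. -/
lemma tsum_int_exp_neg_mul_sub_half_sq {c : ℝ} (hc : 0 < c) :
    ∑' n : ℤ, exp (-c * ((n : ℝ) - 1 / 2) ^ 2) =
      2 * ∑' m : ℕ, exp (-c * ((m : ℝ) + 1 / 2) ^ 2) := by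
  have h := (summable_exp_neg_mul_add_half_sq hc).hasSum
  have hshift : HasSum (fun n : ℤ ↦ exp (-c * (((n + 1 : ℤ) : ℝ) - 1 / 2) ^ 2))
      (2 * ∑' m : ℕ, exp (-c * ((m : ℝ) + 1 / 2) ^ 2)) := by
    rw [two_mul]
    refine HasSum.of_nat_of_neg_add_one (h.congr_fun fun m ↦ ?_) (h.congr_fun fun m ↦ ?_) <;>
      push_cast <;> ring_nf
  exact ((Equiv.addRight (1 : ℤ)).hasSum_iff
    (f := fun n : ℤ ↦ exp (-c * ((n : ℝ) - 1 / 2) ^ 2))).mp hshift |>.tsum_eq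

lemma sqrt_mul_two_mul_exp_div_le {σ : ℝ} (hσ : 1 / 2 ≤ σ) :
    √(2 * π * σ ^ 2) * (2 * (exp (-(2 * π ^ 2 * σ ^ 2) / 4) / (1 - exp (-(2 * π ^ 2 * σ ^ 2))))) ≤
      exp (-σ ^ 2) := by
  set c := 2 * π ^ 2 * σ ^ 2 with hc
  have hπ₁ : 3.1415 < π := pi_gt_d4.trans_le' (by norm_num)
  have hπ₂ : π < 3.1416 := pi_lt_d4
  have he : 2.718 < exp 1 := exp_one_gt_d9.trans_le' (by norm_num)
  have hσ0 : 0 < σ := by linarith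
  have hπsq : 9.869 ≤ π ^ 2 := by nlinarith
  have hσsq : σ / 2 ≤ σ ^ 2 := by nlinarith
  have hc4 : 4.93 ≤ c := by nlinarith
  have hexponent : 1.967 * σ ≤ c / 4 - σ ^ 2 := by nlinarith
  have hsqrt : √(2 * π * σ ^ 2) ≤ 2.5067 * σ :=
    sqrt_le_iff.mpr ⟨by positivity, by nlinarith⟩
  have hexpc : exp (-c) ≤ 1 / 18 := by
    rw [exp_neg, inv_le_comm₀ (exp_pos _) (by norm_num)]
    nlinarith [quadratic_le_exp_of_nonneg (by linarith : 0 ≤ c)]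
  have hfactor : 2 / (1 - exp (-c)) ≤ 2.12 := by
    rw [div_le_iff₀ (by linarith)]; linarith
  have hgrowth : 2.5067 * 2.12 * σ ≤ exp (c / 4 - σ ^ 2) := by
    have h := add_one_le_exp (c / 4 - σ ^ 2 - 1)
    calc 2.5067 * 2.12 * σ ≤ exp 1 * (c / 4 - σ ^ 2) := by
          nlinarith [mul_le_mul he.le hexponent (by positivity) (exp_pos 1).le]
      _ ≤ exp 1 * exp (c / 4 - σ ^ 2 - 1) := by gcongr; linarith
      _ = exp (c / 4 - σ ^ 2) := by rw [← exp_add]; ring_nf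
  calc √(2 * π * σ ^ 2) * (2 * (exp (-c / 4) / (1 - exp (-c))))
      = √(2 * π * σ ^ 2) * (2 / (1 - exp (-c))) * exp (-c / 4) := by ring
    _ ≤ 2.5067 * σ * 2.12 * exp (-c / 4) := by
      have : 0 < 1 - exp (-c) := by linarith
      gcongr
    _ ≤ exp (c / 4 - σ ^ 2) * exp (-c / 4) := by gcongr; linarith
    _ = exp (-σ ^ 2) := by rw [← exp_add]; ring_nf

theorem stmt16 (σ : ℝ) (hσ : 1/2 ≤ σ) :
    rw' σ 0 ≤ Real.exp (-σ ^ 2) := by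
  have hc : 0 < 2 * π ^ 2 * σ ^ 2 := by positivity
  rw [rw'_zero_eq_sqrt_mul_tsum (by linarith : (0 : ℝ) < σ).ne',
    tsum_int_exp_neg_mul_sub_half_sq hc]
  refine le_trans ?_ (sqrt_mul_two_mul_exp_div_le hσ)
  gcongr
  exact tsum_exp_neg_mul_add_half_sq_le hc
end

section
/- Let v_1, …, v_t ∈ ℝⁿ with ‖v_i‖₂ ≤ 1, let δ ∈ (0, 1/2), and let w_0, …, w_t be the iterates of the PartialColoring₁ algorithm, so that each w_ℓ is distributed as N(0, I_n). Then with probability at least 1 − δ, ‖w_ℓ − w_0‖_∞ ≤ 2√(2 log(2nt/δ)) for all ℓ ∈ [t] simultaneously. -/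
/-!
Every coordinate of every iterate `w ℓ` is a standard Gaussian, so it suffices to bound all
`n (t + 1)` of them by `M = √(2 log (2nt/δ))` simultaneously; the bound on `|w ℓ j - w 0 j|`
is then the triangle inequality. The Mills-ratio estimate `P(g > M) ≤ e^{-M²/2} / (M √(2π))`
gives `P(|g| > M) ≤ e^{-M²/2} = δ / (2nt)` once `M ≥ 1`, and the union bound over the
`n (t + 1) ≤ 2nt` coordinates costs at most `δ`.
-/

open MeasureTheory ProbabilityTheory Real Set

lemma gaussianReal_Ioi_le_mills {M : ℝ} (hM : 0 < M) :
    gaussianReal 0 1 (Ioi M) ≤ ENNReal.ofReal (exp (-M ^ 2 / 2) / (M * √(2 * π))) := by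
  -- on `Ioi M` the density is dominated by the exponential `exp (M ^ 2 / 2 - M x)`,
  -- since `x ^ 2 / 2 ≥ M x - M ^ 2 / 2`
  set C : ℝ := (√(2 * π))⁻¹ * exp (M ^ 2 / 2)
  have hdom : ∀ x ∈ Ioi M, gaussianPDF 0 1 x ≤ ENNReal.ofReal (C * exp (-M * x)) := by
    intro x _
    simp only [gaussianPDF, gaussianPDFReal, NNReal.coe_one, mul_one, sub_zero]
    rw [mul_assoc, ← exp_add]
    gcongr
    nlinarith [sq_nonneg (x - M)]
  have hint : IntegrableOn (fun x => C * exp (-M * x)) (Ioi M) :=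
    (integrableOn_exp_mul_Ioi (neg_lt_zero.2 hM) M).const_mul C
  have hval : ∫ x in Ioi M, C * exp (-M * x) = exp (-M ^ 2 / 2) / (M * √(2 * π)) := by
    rw [integral_const_mul, integral_exp_mul_Ioi (neg_lt_zero.2 hM),
      show -M * M = -(M ^ 2 / 2) + -M ^ 2 / 2 by ring, exp_add, exp_neg]
    simp only [C]
    field_simp
  calc gaussianReal 0 1 (Ioi M) = ∫⁻ x in Ioi M, gaussianPDF 0 1 x :=
        gaussianReal_apply 0 one_ne_zero _
    _ ≤ ∫⁻ x in Ioi M, ENNReal.ofReal (C * exp (-M * x)) :=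
        setLIntegral_mono (by fun_prop) hdom
    _ = ENNReal.ofReal (exp (-M ^ 2 / 2) / (M * √(2 * π))) := by
        rw [← hval, ofReal_integral_eq_lintegral_ofReal hint
          (ae_of_all _ fun x => by positivity)]

lemma gaussianReal_abs_gt_le {M : ℝ} (hM : 1 ≤ M) :
    gaussianReal 0 1 {x | M < |x|} ≤ ENNReal.ofReal (exp (-M ^ 2 / 2)) := by
  have hside : gaussianReal 0 1 (Ioi M) ≤ ENNReal.ofReal (exp (-M ^ 2 / 2) / 2) := by
    refine (gaussianReal_Ioi_le_mills (by linarith)).trans (ENNReal.ofReal_le_ofReal ?_)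
    have h2π : 2 ≤ √(2 * π) := Real.le_sqrt_of_sq_le (by nlinarith [pi_gt_three])
    gcongr
    nlinarith
  have hsymm : gaussianReal 0 1 (Neg.neg ⁻¹' Ioi M) = gaussianReal 0 1 (Ioi M) := by
    rw [← Measure.map_apply measurable_neg measurableSet_Ioi, gaussianReal_map_neg, neg_zero]
  have hsplit : {x : ℝ | M < |x|} = Ioi M ∪ Neg.neg ⁻¹' Ioi M := by
    ext x
    simp only [mem_ofPred_eq, mem_union, mem_Ioi, mem_preimage, lt_abs]
  calc gaussianReal 0 1 {x | M < |x|}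
      ≤ gaussianReal 0 1 (Ioi M) + gaussianReal 0 1 (Neg.neg ⁻¹' Ioi M) := by
        rw [hsplit]; exact measure_union_le _ _
    _ ≤ ENNReal.ofReal (exp (-M ^ 2 / 2) / 2) + ENNReal.ofReal (exp (-M ^ 2 / 2) / 2) := by
        rw [hsymm]; gcongr
    _ = ENNReal.ofReal (exp (-M ^ 2 / 2)) := by
        rw [← ENNReal.ofReal_add (by positivity) (by positivity), add_halves]

lemma one_le_sqrt_two_mul_log {K : ℝ} (hK : exp (1 / 2) ≤ K) : 1 ≤ √(2 * log K) := by
  have : 1 / 2 ≤ log K := (le_log_iff_exp_le ((exp_pos _).trans_le hK)).2 hK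
  rw [Real.one_le_sqrt]
  linarith

lemma exp_neg_sq_sqrt_two_mul_log_div_two {K : ℝ} (hK : 1 ≤ K) :
    exp (-√(2 * log K) ^ 2 / 2) = K⁻¹ := by
  rw [sq_sqrt (mul_nonneg zero_le_two (log_nonneg hK)), show -(2 * log K) / 2 = -log K by ring,
    exp_neg, exp_log (by linarith)]

section UnionBound

variable {Ω : Type*} [MeasurableSpace Ω] {P : Measure Ω}

lemma measure_abs_gt_le_of_map_eq_gaussianReal {X : Ω → ℝ} {M : ℝ}
    (hX : P.map X = gaussianReal 0 1) (hM : 1 ≤ M) :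
    P {ω | M < |X ω|} ≤ ENNReal.ofReal (exp (-M ^ 2 / 2)) := by
  have hXm : AEMeasurable X P :=
    .of_map_ne_zero (by rw [hX]; exact IsProbabilityMeasure.ne_zero _)
  change P (X ⁻¹' {x | M < |x|}) ≤ _
  rw [← Measure.map_apply_of_aemeasurable hXm
    (measurableSet_lt measurable_const measurable_abs), hX]
  exact gaussianReal_abs_gt_le hM

lemma measure_exists_abs_gt_le_of_map_eq_gaussianReal {ι : Type*} [Fintype ι]
    {X : ι → Ω → ℝ} {M : ℝ} (hX : ∀ i, P.map (X i) = gaussianReal 0 1) (hM : 1 ≤ M) :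
    P {ω | ∃ i, M < |X i ω|} ≤ Fintype.card ι * ENNReal.ofReal (exp (-M ^ 2 / 2)) := by
  rw [ofPred_exists]
  calc P (⋃ i, {ω | M < |X i ω|}) ≤ ∑ i, P {ω | M < |X i ω|} := measure_iUnion_fintype_le _ _
    _ ≤ ∑ _i : ι, ENNReal.ofReal (exp (-M ^ 2 / 2)) :=
        Finset.sum_le_sum fun i _ => measure_abs_gt_le_of_map_eq_gaussianReal (hX i) hM
    _ = Fintype.card ι * ENNReal.ofReal (exp (-M ^ 2 / 2)) := by
        rw [Finset.sum_const, Finset.card_univ, nsmul_eq_mul]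

lemma measure_exists_abs_gt_sqrt_two_mul_log_le {ι : Type*} [Fintype ι]
    {X : ι → Ω → ℝ} (hX : ∀ i, P.map (X i) = gaussianReal 0 1) {K δ : ℝ}
    (hK : exp (1 / 2) ≤ K) (hcard : Fintype.card ι ≤ δ * K) :
    P {ω | ∃ i, √(2 * log K) < |X i ω|} ≤ ENNReal.ofReal δ := by
  have hK₀ : 0 < K := (exp_pos _).trans_le hK
  have hK₁ : 1 ≤ K := le_trans (one_le_exp (by norm_num)) hK
  refine (measure_exists_abs_gt_le_of_map_eq_gaussianReal hX
    (one_le_sqrt_two_mul_log hK)).trans ?_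
  rw [exp_neg_sq_sqrt_two_mul_log_div_two hK₁, ← ENNReal.ofReal_natCast,
    ← ENNReal.ofReal_mul (by positivity), ← div_eq_mul_inv]
  exact ENNReal.ofReal_le_ofReal ((div_le_iff₀ hK₀).2 hcard)

end UnionBound

theorem stmt18_general {Ω : Type*} [MeasurableSpace Ω] (P : Measure Ω) [IsProbabilityMeasure P]
    (n t : ℕ) (hn : 1 ≤ n) (ht : 1 ≤ t) (δ : ℝ) (hδ : δ ∈ Set.Ioo (0 : ℝ) (1 / 2))
    (w : Fin (t + 1) → Ω → EuclideanSpace ℝ (Fin n))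
    (hlaw : ∀ (ℓ : Fin (t + 1)) (j : Fin n),
      Measure.map (fun ω => w ℓ ω j) P = gaussianReal 0 1) :
    1 - ENNReal.ofReal δ ≤
      P {ω | ∀ (ℓ : Fin (t + 1)) (j : Fin n),
        |w ℓ ω j - w 0 ω j| ≤ 2 * Real.sqrt (2 * Real.log (2 * n * t / δ))} := by
  obtain ⟨hδ₀, hδ⟩ := hδ
  have hn' : (1 : ℝ) ≤ n := by exact_mod_cast hn
  have ht' : (1 : ℝ) ≤ t := by exact_mod_cast ht
  have hK : exp (1 / 2) ≤ 2 * n * t / δ := by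
    have hexp : exp (1 / 2) ≤ 4 := by
      linarith [exp_lt_exp.2 (by norm_num : (1 : ℝ) / 2 < 1), exp_one_lt_d9]
    exact hexp.trans ((le_div_iff₀ hδ₀).2 (by nlinarith))
  have hcard : (Fintype.card (Fin (t + 1) × Fin n) : ℝ) ≤ δ * (2 * n * t / δ) := by
    rw [mul_div_cancel₀ _ hδ₀.ne', Fintype.card_prod, Fintype.card_fin, Fintype.card_fin]
    push_cast
    nlinarith
  set M := √(2 * log (2 * n * t / δ))
  set bad := {ω | ∃ p : Fin (t + 1) × Fin n, M < |w p.1 ω p.2|}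
  have hbad : P bad ≤ ENNReal.ofReal δ := measure_exists_abs_gt_sqrt_two_mul_log_le
    (X := fun p ω => w p.1 ω p.2) (fun p => hlaw p.1 p.2) hK hcard
  have hgood : badᶜ ⊆ {ω | ∀ ℓ j, |w ℓ ω j - w 0 ω j| ≤ 2 * M} := by
    intro ω hω ℓ j
    simp only [bad, mem_compl_iff, mem_ofPred_eq, not_exists, not_lt] at hω
    calc |w ℓ ω j - w 0 ω j| ≤ |w ℓ ω j| + |w 0 ω j| := abs_sub _ _
      _ ≤ 2 * M := by linarith [hω (ℓ, j), hω (0, j)]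
  calc 1 - ENNReal.ofReal δ ≤ 1 - P bad := tsub_le_tsub_left hbad 1
    _ ≤ P badᶜ := by
        rw [tsub_le_iff_left, ← measure_univ (μ := P)]
        exact measure_univ_le_add_compl _
    _ ≤ _ := measure_mono hgood

theorem stmt18 {Ω : Type*} [MeasurableSpace Ω] (P : Measure Ω) [IsProbabilityMeasure P]
    (n t : ℕ) (hn : 1 ≤ n) (ht : 1 ≤ t) (δ : ℝ) (hδ : δ ∈ Set.Ioo (0 : ℝ) (1 / 2))
    (v : Fin t → EuclideanSpace ℝ (Fin n)) (hv : ∀ i, ‖v i‖ ≤ 1)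
    (w : Fin (t + 1) → Ω → EuclideanSpace ℝ (Fin n))
    (ε : Fin t → Ω → ℝ) (hε : ∀ i ω, ε i ω = -1 ∨ ε i ω = 0 ∨ ε i ω = 1)
    (hstep : ∀ (i : Fin t) (ω : Ω), w i.succ ω = w i.castSucc ω + ε i ω • v i)
    (hlaw : ∀ (ℓ : Fin (t + 1)) (j : Fin n),
      Measure.map (fun ω => w ℓ ω j) P = gaussianReal 0 1) :
    1 - ENNReal.ofReal δ ≤
      P {ω | ∀ (ℓ : Fin (t + 1)) (j : Fin n),
        |w ℓ ω j - w 0 ω j| ≤ 2 * Real.sqrt (2 * Real.log (2 * n * t / δ))} :=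
  stmt18_general P n t hn ht δ hδ w hlaw
end
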